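/- For all integers n (with λ = -1, a zero of the Padovan sequence: P_{-1} = 0), P_{-n} = P_{2n-3} - Q_{n-1}*P_{n-2}. -/

import Mathlib

open Matrix

private abbrev M3 := Matrix (Fin 3) (Fin 3) ℤ

private def Mpad : M3 := !![0,1,0;0,0,1;1,1,0]
private def Npad : M3 := !![-1,0,1;1,0,0;0,1,0]

private lemma mn : Mpad * Npad = 1 := by
  simp [Mpad, Npad, Matrix.mul_fin_three, Matrix.one_fin_three]

private lemma nm : Npad * Mpad = 1 := by
  simp [Mpad, Npad, Matrix.mul_fin_three, Matrix.one_fin_three]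

private def upad : M3ˣ := ⟨Mpad, Npad, mn, nm⟩

private noncomputable def fp (n : ℤ) : M3 := ((upad ^ n : M3ˣ) : M3)

private lemma fadd (m n : ℤ) : fp (m + n) = fp m * fp n := by
  show ((upad ^ (m + n) : M3ˣ) : M3) = _
  rw [_root_.zpow_add, Units.val_mul]; rfl

private lemma f0 : fp 0 = 1 := by simp [fp]
private lemma f1 : fp 1 = Mpad := by simp [fp]; rfl
private lemma f2 : fp 2 = Mpad * Mpad := by
  have h : (2:ℤ) = 1 + 1 := by norm_num
  rw [h, fadd, f1]
private lemma f3 : fp 3 = Mpad + 1 := by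
  have h : (3:ℤ) = 2 + 1 := by norm_num
  rw [h, fadd, f2, f1]
  simp [Mpad, Matrix.mul_fin_three, Matrix.one_fin_three]
private lemma fm1 : fp (-1) = Npad := by
  have h : (upad ^ (-1:ℤ)) = upad⁻¹ := by simp
  simp only [fp, h]; rfl

private lemma frec (n : ℤ) : fp n = fp (n - 2) + fp (n - 3) := by
  have h1 : fp n = fp (n - 3) * fp 3 := by
    rw [← fadd]; norm_num
  have h2 : fp (n - 2) = fp (n - 3) * fp 1 := by
    rw [← fadd]
    have e : n - 3 + 1 = n - 2 := by ring
    rw [e]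
  rw [h1, h2, f3, f1, mul_add, mul_one]

private lemma fdet (n : ℤ) : (fp n).det = 1 := by
  have h : Units.map (Matrix.detMonoidHom) upad = 1 := by
    apply Units.ext
    show Mpad.det = 1
    simp [Mpad, Matrix.det_fin_three]
  have h2 : (fp n).det = ((Units.map Matrix.detMonoidHom (upad ^ n) : ℤˣ) : ℤ) := rfl
  rw [h2, MonoidHom.map_zpow, h, _root_.one_zpow, Units.val_one]

-- uniqueness of solutions of the recurrence
private lemma uniq (X Y : ℤ → ℤ)
    (hX : ∀ n : ℤ, X n = X (n - 2) + X (n - 3))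
    (hY : ∀ n : ℤ, Y n = Y (n - 2) + Y (n - 3))
    (h0 : X 0 = Y 0) (h1 : X 1 = Y 1) (h2 : X 2 = Y 2) :
    ∀ n : ℤ, X n = Y n := by
  have key : ∀ n : ℤ, X n = Y n ∧ X (n + 1) = Y (n + 1) ∧ X (n + 2) = Y (n + 2) := by
    intro n
    induction n using Int.induction_on with
    | zero => exact ⟨h0, by simpa using h1, by simpa using h2⟩
    | succ k ih =>
      obtain ⟨a, b, c⟩ := ih
      refine ⟨b, by convert c using 2 <;> ring, ?_⟩
      have hx := hX ((k:ℤ) + 3)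
      have hy := hY ((k:ℤ) + 3)
      have e2 : ((k:ℤ) + 3) - 2 = (k:ℤ) + 1 := by ring
      have e3 : ((k:ℤ) + 3) - 3 = (k:ℤ) := by ring
      rw [e2, e3] at hx hy
      have e4 : ((k:ℤ) + 1) + 2 = (k:ℤ) + 3 := by ring
      rw [e4, hx, hy, a, b]
    | pred k ih =>
      obtain ⟨a, b, c⟩ := ih
      refine ⟨?_, by convert a using 2 <;> ring, by convert b using 2 <;> ring⟩
      have hx := hX (-(k:ℤ) + 2)
      have hy := hY (-(k:ℤ) + 2)
      have e2 : (-(k:ℤ) + 2) - 2 = -(k:ℤ) := by ring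
      have e3 : (-(k:ℤ) + 2) - 3 = -(k:ℤ) - 1 := by ring
      rw [e2, e3] at hx hy
      linarith
  exact fun n => (key n).1

-- explicit Cayley-Hamilton for 3x3 integer matrices
set_option maxHeartbeats 1000000 in
private lemma ch3 (A : M3) :
    A * A * A - A.trace • (A * A) + A.adjugate.trace • A - A.det • 1 = 0 := by
  ext i j
  simp only [Matrix.sub_apply, Matrix.add_apply, Matrix.smul_apply, Matrix.mul_apply,
    Fin.sum_univ_three, Matrix.trace_fin_three, Matrix.det_fin_three, Matrix.zero_apply,
    smul_eq_mul, Matrix.adjugate_fin_three]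
  fin_cases i <;> fin_cases j <;>
    simp [Matrix.one_apply, Matrix.cons_val_zero, Matrix.cons_val_one] <;> ring

theorem stmt7 (P Q : ℤ → ℤ)
    (hP : ∀ n : ℤ, P n = P (n - 2) + P (n - 3))
    (hP0 : P 0 = 1) (hP1 : P 1 = 1) (hP2 : P 2 = 1)
    (hQ : ∀ n : ℤ, Q n = Q (n - 2) + Q (n - 3))
    (hQ0 : Q 0 = 3) (hQ1 : Q 1 = 0) (hQ2 : Q 2 = 2) :
    ∀ n : ℤ, P (-n) = P (2 * n - 3) - Q (n - 1) * P (n - 2) := by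
  intro n
  have hPp : ∀ m : ℤ, P m = fp m 0 0 + fp m 0 1 + fp m 0 2 := by
    refine uniq P _ hP ?_ ?_ ?_ ?_
    · intro m
      rw [frec m]
      simp only [Matrix.add_apply]; ring
    · rw [hP0, f0]; simp [Matrix.one_fin_three]
    · rw [hP1, f1]; simp [Mpad]
    · rw [hP2, f2]; simp [Mpad, Matrix.mul_fin_three]
  have hQq : ∀ m : ℤ, Q m = (fp m).trace := by
    refine uniq Q _ hQ ?_ ?_ ?_ ?_
    · intro m
      rw [frec m, Matrix.trace_add]
    · rw [hQ0, f0]; simp [Matrix.trace_fin_three, Matrix.one_fin_three]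
    · rw [hQ1, f1]; simp [Mpad, Matrix.trace_fin_three]
    · rw [hQ2, f2]; simp [Mpad, Matrix.mul_fin_three, Matrix.trace_fin_three]
  -- adjugate of fp (n-1) is fp (1-n)
  have hadj : (fp (n - 1)).adjugate = fp (1 - n) := by
    have h1 : fp (n - 1) * (fp (n - 1)).adjugate = 1 := by
      rw [Matrix.mul_adjugate, fdet, one_smul]
    have h2 : fp (1 - n) * fp (n - 1) = 1 := by
      rw [← fadd]; norm_num [f0]
    calc (fp (n-1)).adjugate = (fp (1-n) * fp (n-1)) * (fp (n-1)).adjugate := by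
          rw [h2, one_mul]
      _ = fp (1-n) * (fp (n-1) * (fp (n-1)).adjugate) := by rw [mul_assoc]
      _ = fp (1-n) := by rw [h1, mul_one]
  -- Cayley-Hamilton for fp (n-1), multiplied on the right by fp (-n)
  have hch := ch3 (fp (n - 1))
  rw [hadj, fdet, ← fadd, ← fadd, one_smul] at hch
  have hmul := congrArg (· * fp (-n)) hch
  simp only [sub_mul, add_mul, Matrix.smul_mul, one_mul, zero_mul, ← fadd] at hmul
  have e1 : n - 1 + (n - 1) + (n - 1) + -n = 2 * n - 3 := by ring
  have e2 : n - 1 + (n - 1) + -n = n - 2 := by ring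
  have e3 : n - 1 + -n = -1 := by ring
  rw [e1, e2, e3, fm1] at hmul
  have g0 := congrFun (congrFun hmul 0) 0
  have g1 := congrFun (congrFun hmul 0) 1
  have g2 := congrFun (congrFun hmul 0) 2
  simp only [Matrix.sub_apply, Matrix.add_apply, Matrix.smul_apply, Matrix.zero_apply,
    smul_eq_mul, Npad] at g0 g1 g2
  norm_num [Matrix.cons_val_zero, Matrix.cons_val_one, Matrix.cons_val_two] at g0 g1 g2
  rw [hPp (-n), hPp (2 * n - 3), hPp (n - 2), hQq (n - 1)]
  linarith [g0, g1, g2]
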